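/- arXiv:1908.11701 — 2 statements merged into one kernel-verified Lean document; each statement's English description precedes it below -/
import Mathlib

section
/- Let M be a locally compact Hausdorff topological space, let ≤ be a preorder on M whose graph is closed in M × M, and let ≺ be a relation on M such that: (a) q ≺ r implies q ≤ r; (b) for every p ∈ M the sets I⁺(p) = {r | p ≺ r} and I⁻(p) = {r | r ≺ p} are open; (c) for every p ∈ M and every neighborhood U of p there exist q, r ∈ U with q ≺ p and p ≺ r. If every causal diamond J⁺(p) ∩ J⁻(q) (p, q ∈ M) is compact, then the causally convex hull J⁺(K) ∩ J⁻(K) of every compact subset K ⊆ M is compact. -/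
/-- If `R` has closed graph and `K` is compact, then `{r | ∃ s ∈ K, R s r}` is closed. -/
lemma isClosed_rel_image {M : Type*} [TopologicalSpace M] (R : M → M → Prop)
    (hR : IsClosed {x : M × M | R x.1 x.2}) {K : Set M} (hK : IsCompact K) :
    IsClosed {r : M | ∃ s ∈ K, R s r} := by
  haveI : CompactSpace K := isCompact_iff_compactSpace.mp hK
  have heq : {r : M | ∃ s ∈ K, R s r} =
      Prod.snd '' {x : K × M | R (x.1 : M) x.2} := by
    ext r
    constructor
    · rintro ⟨s, hs, hsr⟩
      exact ⟨(⟨s, hs⟩, r), hsr, rfl⟩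
    · rintro ⟨⟨s, x⟩, hx, rfl⟩
      exact ⟨s, s.2, hx⟩
  rw [heq]
  apply isClosedMap_snd_of_compactSpace
  exact hR.preimage (by fun_prop : Continuous fun x : K × M => ((x.1 : M), x.2))

/-- Proposition 1 of the paper, '⇒, compactness' direction, stated with the
abstract properties of the causal relation `≤` and the chronological relation
`chr` used in the proof: on a locally compact Hausdorff space with closed causal
relation, if every causal diamond is compact then the causally convex hull of
every compact set is compact. -/
theorem hull_compact_of_diamond_compact {M : Type*} [TopologicalSpace M]
    [LocallyCompactSpace M] [T2Space M] [Preorder M]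
    (chr : M → M → Prop)
    (hJclosed : IsClosed {x : M × M | x.1 ≤ x.2})
    (hsub : ∀ q r : M, chr q r → q ≤ r)
    (hopen : ∀ p : M, IsOpen {r : M | chr p r} ∧ IsOpen {r : M | chr r p})
    (hdense : ∀ p : M, ∀ U ∈ nhds p, ∃ q ∈ U, ∃ r ∈ U, chr q p ∧ chr p r)
    (hdiamond : ∀ p q : M, IsCompact ({r : M | p ≤ r} ∩ {r : M | r ≤ q})) :
    ∀ K : Set M, IsCompact K →
      IsCompact ({r : M | ∃ s ∈ K, s ≤ r} ∩ {r : M | ∃ s ∈ K, r ≤ s}) := by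
  intro K hK
  -- choose chronological endpoints around each point
  have hsel : ∀ p : M, ∃ qr : M × M, chr qr.1 p ∧ chr p qr.2 := by
    intro p
    obtain ⟨q, -, r, -, h1, h2⟩ := hdense p Set.univ Filter.univ_mem
    exact ⟨(q, r), h1, h2⟩
  choose f h1 h2 using hsel
  -- the open diamonds cover K
  set W : M → Set M := fun p => {x | chr (f p).1 x} ∩ {x | chr x (f p).2} with hW
  have hWopen : ∀ p ∈ K, IsOpen (W p) := fun p _ =>
    (hopen (f p).1).1.inter (hopen (f p).2).2
  have hcov : K ⊆ ⋃ p ∈ K, W p := fun p hp =>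
    Set.mem_biUnion hp ⟨h1 p, h2 p⟩
  obtain ⟨t, htK, htfin, htcov⟩ := hK.elim_finite_subcover_image hWopen hcov
  -- the hull is contained in a finite union of compact diamonds
  have hsubset : {r : M | ∃ s ∈ K, s ≤ r} ∩ {r : M | ∃ s ∈ K, r ≤ s} ⊆
      ⋃ p ∈ t, ⋃ p' ∈ t, ({r : M | (f p).1 ≤ r} ∩ {r : M | r ≤ (f p').2}) := by
    rintro x ⟨⟨s, hs, hsx⟩, ⟨s', hs', hxs'⟩⟩
    obtain ⟨p, hp, hsW⟩ := Set.mem_iUnion₂.mp (htcov hs)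
    obtain ⟨p', hp', hsW'⟩ := Set.mem_iUnion₂.mp (htcov hs')
    refine Set.mem_biUnion hp (Set.mem_biUnion hp' ?_)
    exact ⟨le_trans (hsub _ _ hsW.1) hsx, le_trans hxs' (hsub _ _ hsW'.2)⟩
  have hbig : IsCompact (⋃ p ∈ t, ⋃ p' ∈ t,
      ({r : M | (f p).1 ≤ r} ∩ {r : M | r ≤ (f p').2})) :=
    htfin.isCompact_biUnion fun p _ =>
      htfin.isCompact_biUnion fun p' _ => hdiamond (f p).1 (f p').2
  refine hbig.of_isClosed_subset ?_ hsubset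
  exact (isClosed_rel_image (· ≤ ·) hJclosed hK).inter
    (isClosed_rel_image (fun a b => b ≤ a)
      (hJclosed.preimage (continuous_snd.prodMk continuous_fst)) hK)
end

section
/- Let M be a locally compact Hausdorff topological space, let ≤ be a preorder on M whose graph is closed in M × M, and let ≺ be a relation on M such that: (a) q ≺ r implies q ≤ r; (b) for every p ∈ M the sets I⁺(p) = {r | p ≺ r} and I⁻(p) = {r | r ≺ p} are open; (c) for every p ∈ M and every neighborhood U of p there exist q, r ∈ U with q ≺ p and p ≺ r. Then every causal diamond J⁺(p) ∩ J⁻(q) (p, q ∈ M) is compact if and only if the causally convex hull J⁺(K) ∩ J⁻(K) of every compact subset K ⊆ M is compact. -/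
/-- The future of a compact set under a closed preorder is closed. -/
lemma future_isClosed {M : Type*} [TopologicalSpace M] [Preorder M]
    (hJclosed : IsClosed {x : M × M | x.1 ≤ x.2}) {K : Set M} (hK : IsCompact K) :
    IsClosed {r : M | ∃ s ∈ K, s ≤ r} := by
  have : CompactSpace K := isCompact_iff_compactSpace.mp hK
  have hmap : IsClosedMap (Prod.snd : K × M → M) := isClosedMap_snd_of_compactSpace
  have hS : IsClosed {x : K × M | (x.1 : M) ≤ x.2} := by
    have hc : Continuous (fun x : K × M => ((x.1 : M), x.2)) := by continuity
    exact hJclosed.preimage hc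
  have := hmap _ hS
  convert this using 1
  ext r
  simp only [Set.mem_setOf_eq, Set.mem_image]
  constructor
  · rintro ⟨s, hs, hle⟩; exact ⟨(⟨s, hs⟩, r), hle, rfl⟩
  · rintro ⟨⟨s, r'⟩, hle, rfl⟩; exact ⟨s, s.2, hle⟩

lemma past_isClosed {M : Type*} [TopologicalSpace M] [Preorder M]
    (hJclosed : IsClosed {x : M × M | x.1 ≤ x.2}) {K : Set M} (hK : IsCompact K) :
    IsClosed {r : M | ∃ s ∈ K, r ≤ s} := by
  have h' : IsClosed {x : M × M | x.1 ≥ x.2} := by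
    have : Continuous (Prod.swap : M × M → M × M) := continuous_swap
    exact hJclosed.preimage this
  exact future_isClosed (M := Mᵒᵈ) h' hK

/-- Proposition 1 of the paper (compactness case): under the abstract properties
of the causal relation `≤` and chronological relation `chr` of a spacetime, the
compactness of all causal diamonds is equivalent to the compactness of the
causally convex hulls of all compact sets. -/
theorem diamond_compact_iff_hull_compact {M : Type*} [TopologicalSpace M]
    [LocallyCompactSpace M] [T2Space M] [Preorder M]
    (chr : M → M → Prop)
    (hJclosed : IsClosed {x : M × M | x.1 ≤ x.2})
    (hsub : ∀ q r : M, chr q r → q ≤ r)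
    (hopen : ∀ p : M, IsOpen {r : M | chr p r} ∧ IsOpen {r : M | chr r p})
    (hdense : ∀ p : M, ∀ U ∈ nhds p, ∃ q ∈ U, ∃ r ∈ U, chr q p ∧ chr p r) :
    (∀ p q : M, IsCompact ({r : M | p ≤ r} ∩ {r : M | r ≤ q})) ↔
      (∀ K : Set M, IsCompact K →
        IsCompact ({r : M | ∃ s ∈ K, s ≤ r} ∩ {r : M | ∃ s ∈ K, r ≤ s})) := by
  constructor
  · intro hdiam K hK
    -- choose, for each s ∈ K, points q s ≺ s ≺ r s
    have hex : ∀ s : M, ∃ a b, chr a s ∧ chr s b := fun s => by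
      obtain ⟨a, -, b, -, hab⟩ := hdense s Set.univ Filter.univ_mem
      exact ⟨a, b, hab⟩
    choose q r hq using hex
    -- open cover of K
    have hcover : K ⊆ ⋃ s ∈ K, ({x : M | chr (q s) x} ∩ {x : M | chr x (r s)}) := by
      intro s hs
      exact Set.mem_biUnion hs ⟨(hq s).1, (hq s).2⟩
    obtain ⟨t, htK, htfin, htcover⟩ := hK.elim_finite_subcover_image
      (fun s _ => ((hopen (q s)).1.inter ((hopen (r s)).2))) hcover
    -- the hull is contained in a finite union of diamonds
    have hsub' : {x : M | ∃ s ∈ K, s ≤ x} ∩ {x : M | ∃ s ∈ K, x ≤ s} ⊆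
        ⋃ i ∈ t, ⋃ j ∈ t, ({x : M | q i ≤ x} ∩ {x : M | x ≤ r j}) := by
      rintro x ⟨⟨s, hs, hsx⟩, ⟨s', hs', hxs'⟩⟩
      obtain ⟨i, hi, his⟩ := Set.mem_iUnion₂.mp (htcover hs)
      obtain ⟨j, hj, hjs⟩ := Set.mem_iUnion₂.mp (htcover hs')
      refine Set.mem_iUnion₂.mpr ⟨i, hi, Set.mem_iUnion₂.mpr ⟨j, hj, ?_, ?_⟩⟩
      · exact le_trans (hsub _ _ his.1) hsx
      · exact le_trans hxs' (hsub _ _ hjs.2)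
    have hcmp : IsCompact (⋃ i ∈ t, ⋃ j ∈ t, ({x : M | q i ≤ x} ∩ {x : M | x ≤ r j})) := by
      exact htfin.isCompact_biUnion fun i _ => htfin.isCompact_biUnion fun j _ => hdiam (q i) (r j)
    refine IsCompact.of_isClosed_subset hcmp ?_ hsub'
    exact (future_isClosed hJclosed hK).inter (past_isClosed hJclosed hK)
  · intro hhull p q
    have hK : IsCompact ({p, q} : Set M) := ((Set.finite_singleton q).insert p).isCompact
    have h := hhull _ hK
    refine IsCompact.of_isClosed_subset h ?_ ?_
    · have h1 : IsClosed {r : M | p ≤ r} :=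
        hJclosed.preimage (by continuity : Continuous fun r : M => (p, r))
      have h2 : IsClosed {r : M | r ≤ q} :=
        hJclosed.preimage (by continuity : Continuous fun r : M => (r, q))
      exact h1.inter h2
    · rintro x ⟨h1, h2⟩
      exact ⟨⟨p, Set.mem_insert _ _, h1⟩, ⟨q, Set.mem_insert_of_mem _ rfl, h2⟩⟩
end
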